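/- For every t ≥ 2 and γ > 0 there exists ε > 0 such that: if G = (V, E) is a graph and V₁,…,V_t ⊆ V are (not necessarily disjoint) sets such that for each 1 ≤ i ≠ j ≤ t the pair (Vᵢ, Vⱼ) is ε-regular with density d_{ij}, then the number of tuples (v₁,…,v_t) ∈ V₁ × ⋯ × V_t with v_i v_j ∈ E for all 1 ≤ i < j ≤ t is at least (∏_{1≤i<j≤t} d_{ij} − γ)·∏_{i=1}^t |Vᵢ|. -/

import Mathlib

open scoped Classical

noncomputable section

variable {α : Type*}

/-- Density of the pair `(X, Y)` in the graph `G`. -/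
def gdens (G : SimpleGraph α) (X Y : Finset α) : ℝ :=
  (((X ×ˢ Y).filter fun p => G.Adj p.1 p.2).card : ℝ) / ((X.card : ℝ) * (Y.card : ℝ))

/-- The pair `(X, Y)` is `ε`-regular with respect to `G`. -/
def EpsRegular (G : SimpleGraph α) (X Y : Finset α) (ε : ℝ) : Prop :=
  ∀ X' ⊆ X, ∀ Y' ⊆ Y, ε * (X.card : ℝ) ≤ (X'.card : ℝ) → ε * (Y.card : ℝ) ≤ (Y'.card : ℝ) →
    |gdens G X' Y' - gdens G X Y| ≤ ε

end

/-!
The clique is embedded greedily, one vertex at a time. By regularity, all but `ε |X|` vertices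
of `X` have at least `(d(X, Y) - ε) |W|` neighbours in any `W ⊆ Y` with `|W| ≥ ε |Y|`. Hence
all but `t ε |V₀|` choices of the first vertex shrink every later candidate set `W_j` by a factor
at least `d₀ⱼ - ε`, and induction on the shrunken candidate sets yields at least
`∏ᵢ (∏_{j<i} (dⱼᵢ - ε)⁺ - t ε) |Vᵢ|` cliques; if some candidate set drops below `ε |Vⱼ|` the
corresponding factor is already `≤ 0`. Comparing products of numbers in `[0, 1]` term by term
(`∏ g - ∏ f ≤ ∑ (g - f)`) loses at most `2 t² ε`, so `ε = γ / (2 t²)` works.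
-/

open Finset

section Products

variable {ι R : Type*} [CommRing R] [LinearOrder R] [IsStrictOrderedRing R]

lemma prod_sub_prod_le_sum_sub (s : Finset ι) {f g : ι → R} (hf : ∀ i ∈ s, 0 ≤ f i)
    (hfg : ∀ i ∈ s, f i ≤ g i) (hg : ∀ i ∈ s, g i ≤ 1) :
    ∏ i ∈ s, g i - ∏ i ∈ s, f i ≤ ∑ i ∈ s, (g i - f i) := by
  induction s using Finset.cons_induction with
  | empty => simp
  | cons a s ha ih =>
    simp only [forall_mem_cons] at hf hfg hg
    rw [prod_cons, prod_cons, sum_cons]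
    have hF1 : ∏ i ∈ s, f i ≤ 1 := prod_le_one hf.2 fun i hi => (hfg.2 i hi).trans (hg.2 i hi)
    have hFG : ∏ i ∈ s, f i ≤ ∏ i ∈ s, g i := prod_le_prod hf.2 hfg.2
    -- `g a * G - f a * F = g a * (G - F) + (g a - f a) * F`
    nlinarith [ih hf.2 hfg.2 hg.2, mul_le_mul_of_nonneg_right hg.1 (sub_nonneg.2 hFG),
      mul_le_mul_of_nonneg_left hF1 (sub_nonneg.2 hfg.1), prod_nonneg hf.2]

lemma prod_sub_prod_posPart_sub_le (s : Finset ι) {d : ι → R} {ε : R} (hε : 0 ≤ ε)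
    (hd₀ : ∀ i ∈ s, 0 ≤ d i) (hd₁ : ∀ i ∈ s, d i ≤ 1) :
    ∏ i ∈ s, d i - ∏ i ∈ s, (d i - ε)⁺ ≤ #s * ε := by
  calc ∏ i ∈ s, d i - ∏ i ∈ s, (d i - ε)⁺ ≤ ∑ i ∈ s, (d i - (d i - ε)⁺) :=
        prod_sub_prod_le_sum_sub s (fun i _ => posPart_nonneg _)
          (fun i hi => max_le (by linarith) (hd₀ i hi)) hd₁
    _ ≤ ∑ _i ∈ s, ε := sum_le_sum fun i _ => by linarith [le_posPart (d i - ε)]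
    _ = #s * ε := by rw [sum_const, nsmul_eq_mul]

lemma posPart_mul_le_of_mul_le {a b c : R} (hc : 0 ≤ c) (hb : 0 ≤ b) (h : a * c ≤ b) :
    a⁺ * c ≤ b := by
  rw [posPart_def, max_mul_of_nonneg _ _ hc, zero_mul]; exact max_le h hb

end Products

lemma Fin.prod_filter_lt_succ {M : Type*} [CommMonoid M] {t : ℕ} (f : Fin (t + 1) → M)
    (i : Fin t) : ∏ j with j < i.succ, f j = f 0 * ∏ j with j < i, f j.succ := by
  simp [prod_filter, Fin.prod_univ_succ, Fin.succ_pos]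

lemma Fin.prod_filter_fst_lt_snd {M : Type*} [CommMonoid M] {t : ℕ} (f : Fin t → Fin t → M) :
    ∏ p : Fin t × Fin t with p.1 < p.2, f p.1 p.2 = ∏ i, ∏ j with j < i, f j i := by
  simp only [prod_filter, ← univ_product_univ, prod_product_right]

lemma prod_sub_le_prod_posPart_sub {t : ℕ} {ε : ℝ} (hε : 0 ≤ ε) {d : Fin t → Fin t → ℝ}
    (hd₀ : ∀ i j, 0 ≤ d i j) (hd₁ : ∀ i j, d i j ≤ 1) :
    ∏ i, ∏ j with j < i, d j i - 2 * t ^ 2 * ε ≤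
      ∏ i, ((∏ j with j < i, (d j i - ε)⁺) - t * ε)⁺ := by
  have ha₀ : ∀ i, 0 ≤ ∏ j with j < i, d j i := fun i => prod_nonneg fun j _ => hd₀ j i
  have hP : ∀ i, ∏ j with j < i, d j i - t * ε ≤ ∏ j with j < i, (d j i - ε)⁺ := by
    intro i
    have hcard : (#{j | j < i} : ℝ) ≤ t := by
      exact_mod_cast (card_le_univ _).trans (Fintype.card_fin t).le
    nlinarith [prod_sub_prod_posPart_sub_le {j | j < i} hε (fun j _ => hd₀ j i)
      fun j _ => hd₁ j i]
  have hPa : ∀ i, ∏ j with j < i, (d j i - ε)⁺ ≤ ∏ j with j < i, d j i := fun i =>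
    prod_le_prod (fun _ _ => posPart_nonneg _) fun j _ => max_le (by linarith) (hd₀ j i)
  have hgap : ∑ i, (∏ j with j < i, d j i - ((∏ j with j < i, (d j i - ε)⁺) - t * ε)⁺) ≤
      ∑ _i : Fin t, 2 * t * ε := sum_le_sum fun i _ => by
    linarith [hP i, le_posPart ((∏ j with j < i, (d j i - ε)⁺) - t * ε)]
  rw [sum_const, card_univ, Fintype.card_fin, nsmul_eq_mul] at hgap
  have := prod_sub_prod_le_sum_sub univ (f := fun i => ((∏ j with j < i, (d j i - ε)⁺) - t * ε)⁺)
    (g := fun i => ∏ j with j < i, d j i) (fun i _ => posPart_nonneg _)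
    (fun i _ => max_le (by linarith [hPa i, mul_nonneg (Nat.cast_nonneg t) hε]) (ha₀ i))
    fun i _ => prod_le_one (fun j _ => hd₀ j i) fun j _ => hd₁ j i
  linarith

variable {α : Type*}

lemma gdens_eq_edgeDensity (G : SimpleGraph α) (X Y : Finset α) :
    gdens G X Y = G.edgeDensity X Y := by
  rw [gdens, SimpleGraph.edgeDensity_def, SimpleGraph.interedges_def]
  push_cast; rfl

lemma gdens_nonneg (G : SimpleGraph α) (X Y : Finset α) : 0 ≤ gdens G X Y := by
  rw [gdens_eq_edgeDensity]; exact_mod_cast G.edgeDensity_nonneg X Y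

lemma gdens_le_one (G : SimpleGraph α) (X Y : Finset α) : gdens G X Y ≤ 1 := by
  rw [gdens_eq_edgeDensity]; exact_mod_cast G.edgeDensity_le_one X Y

lemma card_filter_adj_product (G : SimpleGraph α) (X Y : Finset α) :
    #{p ∈ X ×ˢ Y | G.Adj p.1 p.2} = ∑ x ∈ X, #{y ∈ Y | G.Adj x y} := by
  simp only [card_filter, sum_product]

lemma EpsRegular.card_le_of_forall_degree_lt {G : SimpleGraph α} {X Y B W : Finset α} {ε : ℝ}
    (hreg : EpsRegular G X Y ε) (hε : 0 ≤ ε) (hBX : B ⊆ X) (hWY : W ⊆ Y)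
    (hW : ε * #Y ≤ #W) (hB : ∀ x ∈ B, (#{y ∈ W | G.Adj x y} : ℝ) < (gdens G X Y - ε) * #W) :
    (#B : ℝ) ≤ ε * #X := by
  by_contra! hBbig
  have hBpos : (0 : ℝ) < #B := (by positivity : 0 ≤ ε * #X).trans_lt hBbig
  obtain ⟨x, hx⟩ : B.Nonempty := card_pos.1 (by exact_mod_cast hBpos)
  have hWpos : (0 : ℝ) < #W := by
    have hdeg := (Nat.cast_nonneg _).trans_lt (hB x hx)
    exact lt_of_le_of_ne (Nat.cast_nonneg _) fun h => by simp [← h] at hdeg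
  have hlt : gdens G B W < gdens G X Y - ε := by
    rw [gdens, div_lt_iff₀ (by positivity), card_filter_adj_product]
    push_cast
    calc ∑ x ∈ B, (#{y ∈ W | G.Adj x y} : ℝ) < ∑ _x ∈ B, (gdens G X Y - ε) * #W :=
          sum_lt_sum_of_nonempty ⟨x, hx⟩ hB
      _ = _ := by rw [sum_const, nsmul_eq_mul]; ring
  linarith [(abs_le.1 (hreg B hBX W hWY hBbig.le hW)).1]

noncomputable def typicalVertices (G : SimpleGraph α) (ε : ℝ) (X U : Finset α) {t : ℕ}
    (Y W : Fin t → Finset α) : Finset α :=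
  {x ∈ U | ∀ j, (gdens G X (Y j) - ε) * #(W j) ≤ #{y ∈ W j | G.Adj x y}}

lemma card_typicalVertices {G : SimpleGraph α} {ε : ℝ} {X U : Finset α} {t : ℕ}
    {Y W : Fin t → Finset α} (hε : 0 ≤ ε) (hreg : ∀ j, EpsRegular G X (Y j) ε) (hUX : U ⊆ X)
    (hWY : ∀ j, W j ⊆ Y j) (hW : ∀ j, ε * #(Y j) ≤ #(W j)) :
    (#U : ℝ) - t * ε * #X ≤ #(typicalVertices G ε X U Y W) := by
  have hatypical : U \ typicalVertices G ε X U Y W ⊆ univ.biUnion fun j =>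
      {x ∈ U | ¬ (gdens G X (Y j) - ε) * #(W j) ≤ #{y ∈ W j | G.Adj x y}} := by
    intro x hx
    simp only [typicalVertices, mem_sdiff, mem_filter, not_and, not_forall] at hx
    obtain ⟨j, hj⟩ := hx.2 hx.1
    exact mem_biUnion.2 ⟨j, mem_univ j, mem_filter.2 ⟨hx.1, hj⟩⟩
  have hcard : (#(U \ typicalVertices G ε X U Y W) : ℝ) ≤ t * ε * #X :=
    calc (#(U \ typicalVertices G ε X U Y W) : ℝ)
        ≤ ∑ j, (#{x ∈ U | ¬ (gdens G X (Y j) - ε) * #(W j) ≤ #{y ∈ W j | G.Adj x y}} : ℝ) := by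
          exact_mod_cast (card_le_card hatypical).trans card_biUnion_le
      _ ≤ ∑ _j : Fin t, ε * #X := sum_le_sum fun j _ =>
          (hreg j).card_le_of_forall_degree_lt hε ((filter_subset _ _).trans hUX) (hWY j) (hW j)
            fun x hx => not_le.1 (mem_filter.1 hx).2
      _ = t * ε * #X := by simp [mul_assoc]
  have hsub : typicalVertices G ε X U Y W ⊆ U := filter_subset _ _
  rw [card_sdiff_of_subset hsub, Nat.cast_sub (card_le_card hsub)] at hcard
  linarith

noncomputable def transversalCliques (G : SimpleGraph α) {t : ℕ} (W : Fin t → Finset α) :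
    Finset (Fin t → α) :=
  {v ∈ Fintype.piFinset W | ∀ i j, i < j → G.Adj (v i) (v j)}

lemma card_transversalCliques_succ (G : SimpleGraph α) {t : ℕ} (W : Fin (t + 1) → Finset α) :
    #(transversalCliques G W) =
      ∑ x ∈ W 0, #(transversalCliques G fun i => {y ∈ W i.succ | G.Adj x y}) := by
  rw [← card_sigma]
  refine card_nbij' (fun v => ⟨v 0, Fin.tail v⟩) (fun p => Fin.cons p.1 p.2) ?_ ?_ ?_ ?_
  · intro v hv
    simp_all [transversalCliques, Fin.forall_fin_succ, Fin.tail]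
  · rintro ⟨x, w⟩ h
    simp_all [transversalCliques, Fin.forall_fin_succ, Fin.succ_pos]
  · intro v _; simp
  · rintro ⟨x, w⟩ _; simp

section GreedyEmbedding

variable {G : SimpleGraph α} {ε : ℝ} {t : ℕ}

/-- A lower bound for the number of choices of the `i`-th vertex when a transversal clique is
embedded greedily: each earlier vertex keeps a `d - ε` fraction of the candidates in `W i`, and
`t ε |V i|` pays for the atypical vertices discarded along the way. -/
noncomputable def greedyBound (G : SimpleGraph α) (ε : ℝ) (V W : Fin t → Finset α)
    (i : Fin t) : ℝ :=
  ((∏ j with j < i, (gdens G (V j) (V i) - ε)⁺) * #(W i) - t * ε * #(V i))⁺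

lemma greedyBound_zero (V W : Fin (t + 1) → Finset α) :
    greedyBound G ε V W 0 = (#(W 0) - (t + 1 : ℕ) * ε * #(V 0) : ℝ)⁺ := by
  simp [greedyBound]

lemma greedyBound_succ_eq_zero (hε : 0 ≤ ε) {V W : Fin (t + 1) → Finset α} {j : Fin t}
    (hj : (gdens G (V 0) (V j.succ) - ε)⁺ * #(W j.succ) < ε * #(V j.succ)) :
    greedyBound G ε V W j.succ = 0 := by
  have hP : ∏ i with i < j, (gdens G (V i.succ) (V j.succ) - ε)⁺ ≤ 1 :=
    prod_le_one (fun _ _ => posPart_nonneg _) fun i _ =>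
      max_le (by linarith [gdens_le_one G (V i.succ) (V j.succ)]) zero_le_one
  rw [greedyBound, posPart_eq_zero,
    Fin.prod_filter_lt_succ (fun i => (gdens G (V i) (V j.succ) - ε)⁺)]
  push_cast
  nlinarith [mul_le_mul_of_nonneg_right hP
      (mul_nonneg (posPart_nonneg (gdens G (V 0) (V j.succ) - ε)) (Nat.cast_nonneg #(W j.succ))),
    (by positivity : 0 ≤ (t : ℝ) * ε * #(V j.succ))]

lemma greedyBound_succ_le (hε : 0 ≤ ε) {V W : Fin (t + 1) → Finset α} {x : α}
    (hx : x ∈ typicalVertices G ε (V 0) (W 0) (fun j => V j.succ) fun j => W j.succ) (i : Fin t) :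
    greedyBound G ε V W i.succ ≤
      greedyBound G ε (fun j => V j.succ) (fun j => {y ∈ W j.succ | G.Adj x y}) i := by
  have hdeg : (gdens G (V 0) (V i.succ) - ε)⁺ * #(W i.succ) ≤ #{y ∈ W i.succ | G.Adj x y} :=
    posPart_mul_le_of_mul_le (Nat.cast_nonneg _) (Nat.cast_nonneg _) ((mem_filter.1 hx).2 i)
  have hP : 0 ≤ ∏ j with j < i, (gdens G (V j.succ) (V i.succ) - ε)⁺ :=
    prod_nonneg fun _ _ => posPart_nonneg _
  rw [greedyBound, greedyBound,
    Fin.prod_filter_lt_succ (fun j => (gdens G (V j) (V i.succ) - ε)⁺)]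
  refine posPart_mono ?_
  push_cast
  nlinarith [mul_le_mul_of_nonneg_left hdeg hP, (by positivity : 0 ≤ ε * #(V i.succ))]

theorem prod_greedyBound_le_card_transversalCliques (hε : 0 ≤ ε) (V W : Fin t → Finset α)
    (hreg : ∀ i j, i ≠ j → EpsRegular G (V i) (V j) ε) (hWV : ∀ i, W i ⊆ V i) :
    ∏ i, greedyBound G ε V W i ≤ #(transversalCliques G W) := by
  induction t with
  | zero => simp [transversalCliques]
  | succ t ih =>
    by_cases hlarge :
        ∀ j : Fin t, ε * #(V j.succ) ≤ (gdens G (V 0) (V j.succ) - ε)⁺ * #(W j.succ)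
    · set T := typicalVertices G ε (V 0) (W 0) (fun j => V j.succ) (fun j => W j.succ)
      have hT : greedyBound G ε V W 0 ≤ #T := by
        have := card_typicalVertices (U := W 0) hε
          (fun j => hreg 0 j.succ (Fin.succ_ne_zero j).symm) (hWV 0) (fun j => hWV j.succ)
          fun j => (hlarge j).trans (mul_le_of_le_one_left (Nat.cast_nonneg _)
            (max_le (by linarith [gdens_le_one G (V 0) (V j.succ)]) zero_le_one))
        rw [greedyBound_zero]
        refine max_le ?_ (Nat.cast_nonneg _)
        push_cast
        nlinarith [(by positivity : 0 ≤ ε * #(V 0))]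
      have hnbhd : ∀ x ∈ T, ∏ i : Fin t, greedyBound G ε V W i.succ ≤
          #(transversalCliques G fun i => {y ∈ W i.succ | G.Adj x y}) := fun x hx =>
        (prod_le_prod (fun i _ => posPart_nonneg _) fun i _ => greedyBound_succ_le hε hx i).trans
          (ih _ _ (fun i j hij => hreg _ _ (Fin.succ_injective _ |>.ne hij))
            fun i => (filter_subset _ _).trans (hWV i.succ))
      calc ∏ i, greedyBound G ε V W i
          = greedyBound G ε V W 0 * ∏ i : Fin t, greedyBound G ε V W i.succ :=
            Fin.prod_univ_succ _
        _ ≤ ∑ _x ∈ T, ∏ i : Fin t, greedyBound G ε V W i.succ := by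
            rw [sum_const, nsmul_eq_mul]
            exact mul_le_mul_of_nonneg_right hT (prod_nonneg fun _ _ => posPart_nonneg _)
        _ ≤ ∑ x ∈ T, (#(transversalCliques G fun i => {y ∈ W i.succ | G.Adj x y}) : ℝ) :=
            sum_le_sum hnbhd
        _ ≤ ∑ x ∈ W 0, (#(transversalCliques G fun i => {y ∈ W i.succ | G.Adj x y}) : ℝ) :=
            sum_le_sum_of_subset_of_nonneg (filter_subset _ _) fun _ _ _ => Nat.cast_nonneg _
        _ = #(transversalCliques G W) := by
            rw [card_transversalCliques_succ]; push_cast; rfl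
    · push Not at hlarge
      obtain ⟨j, hj⟩ := hlarge
      exact (prod_eq_zero (mem_univ j.succ) (greedyBound_succ_eq_zero hε hj)).trans_le
        (Nat.cast_nonneg _)

end GreedyEmbedding

/-- graph counting lemma: for every `t ≥ 2` and `γ > 0` there is
`ε > 0` such that for pairwise `ε`-regular tuples `V₁, …, V_t`, the number of
labeled cliques transversal to the tuple is at least
`(∏_{i<j} d_{ij} − γ)·∏ᵢ |Vᵢ|`. -/
theorem stmt_15 :
    ∀ (t : ℕ) (γ : ℝ), 2 ≤ t → 0 < γ →
      ∃ ε : ℝ, 0 < ε ∧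
        ∀ (α : Type) (G : SimpleGraph α) (V : Fin t → Finset α),
          (∀ i j, i ≠ j → EpsRegular G (V i) (V j) ε) →
          ((∏ p ∈ Finset.univ.filter (fun p : Fin t × Fin t => p.1 < p.2),
              gdens G (V p.1) (V p.2)) - γ) * ∏ i, ((V i).card : ℝ) ≤
            (((Fintype.piFinset V).filter fun v : Fin t → α =>
              ∀ i j : Fin t, i < j → G.Adj (v i) (v j)).card : ℝ) := by
  intro t γ ht hγ
  have ht₀ : (0 : ℝ) < t := by exact_mod_cast (by omega : 0 < t)
  refine ⟨γ / (2 * t ^ 2), by positivity, fun α G V hreg => ?_⟩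
  have hdens := prod_sub_le_prod_posPart_sub (by positivity : 0 ≤ γ / (2 * t ^ 2))
    (fun i j => gdens_nonneg G (V i) (V j)) fun i j => gdens_le_one G (V i) (V j)
  rw [mul_div_cancel₀ _ (by positivity),
    ← Fin.prod_filter_fst_lt_snd (fun j i => gdens G (V j) (V i))] at hdens
  refine (mul_le_mul_of_nonneg_right hdens (by positivity)).trans ?_
  rw [← prod_mul_distrib]
  refine le_of_eq_of_le (prod_congr rfl fun i _ => ?_)
    (prod_greedyBound_le_card_transversalCliques (by positivity) V V hreg fun _ => subset_rfl)
  rw [greedyBound, posPart_def, posPart_def, max_mul_of_nonneg _ _ (Nat.cast_nonneg _), sub_mul,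
    zero_mul]
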